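/- Fix real parameters γ, δ. Let H(x,y,z) = x² + y² + z, let J(x,y,z) be the skew-symmetric matrix with J₁₂ = −y + δ/2, J₁₃ = z, J₂₃ = 0, and let R(x,y,z) = diag(−γ/2, −γ/2, 2z). Then for every (x,y,z) ∈ ℝ³, (J − R)∇H = (−2y² + γx + z + δy, 2xy + γy − δx, −2xz − 2z), i.e. the reduced three-wave-interaction model is a resistive-Hamiltonian system. Moreover ∇H·((J−R)∇H) = 2γ(x²+y²) − 2z, the divergence of this vector field is identically 2(γ−1), and the Poisson vector J = (0, z, y − δ/2) associated to J satisfies ∇×J = 0. -/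
import Mathlib


set_option linter.unusedVariables false

open Matrix

/-- Partial derivative with respect to the first variable. -/
noncomputable def pd1 (f : ℝ → ℝ → ℝ → ℝ) (x y z : ℝ) : ℝ := deriv (fun t => f t y z) x
/-- Partial derivative with respect to the second variable. -/
noncomputable def pd2 (f : ℝ → ℝ → ℝ → ℝ) (x y z : ℝ) : ℝ := deriv (fun t => f x t z) y
/-- Partial derivative with respect to the third variable. -/
noncomputable def pd3 (f : ℝ → ℝ → ℝ → ℝ) (x y z : ℝ) : ℝ := deriv (fun t => f x y t) z

/-- Hamiltonian of the reduced three-wave-interaction model. -/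
noncomputable def H (x y z : ℝ) : ℝ := x ^ 2 + y ^ 2 + z

/-- Gradient of `H`. -/
noncomputable def gradH (x y z : ℝ) : Fin 3 → ℝ := ![pd1 H x y z, pd2 H x y z, pd3 H x y z]

/-- Poisson matrix of the reduced three-wave-interaction model. -/
noncomputable def Jmat (δ : ℝ) (x y z : ℝ) : Matrix (Fin 3) (Fin 3) ℝ :=
  !![0, -y + δ / 2, z; y - δ / 2, 0, 0; -z, 0, 0]

/-- Resistance matrix of the reduced three-wave-interaction model. -/
noncomputable def Rmat (γ : ℝ) (x y z : ℝ) : Matrix (Fin 3) (Fin 3) ℝ :=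
  !![-γ / 2, 0, 0; 0, -γ / 2, 0; 0, 0, 2 * z]

/-- The resistive-Hamiltonian vector field `(J − R)∇H`. -/
noncomputable def F (γ δ : ℝ) (x y z : ℝ) : Fin 3 → ℝ :=
  (Jmat δ x y z - Rmat γ x y z).mulVec (gradH x y z)

lemma gradH_eq (x y z : ℝ) : gradH x y z = ![2 * x, 2 * y, 1] := by
  have h1 : pd1 H x y z = 2 * x := by
    simp only [pd1, H]
    rw [show (fun t : ℝ => t ^ 2 + y ^ 2 + z) = fun t : ℝ => t ^ 2 + (y ^ 2 + z) by
      funext t; ring]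
    simp [deriv_add_const, deriv_pow]
  have h2 : pd2 H x y z = 2 * y := by
    simp only [pd2, H]
    rw [show (fun t : ℝ => x ^ 2 + t ^ 2 + z) = fun t : ℝ => t ^ 2 + (x ^ 2 + z) by
      funext t; ring]
    simp [deriv_add_const, deriv_pow]
  have h3 : pd3 H x y z = 1 := by
    simp only [pd3, H]
    rw [show (fun t : ℝ => x ^ 2 + y ^ 2 + t) = fun t : ℝ => t + (x ^ 2 + y ^ 2) by
      funext t; ring]
    simp
  rw [gradH, h1, h2, h3]

lemma deriv_linear (a b x : ℝ) : deriv (fun t => a * t + b) x = a := by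
  simpa using (((hasDerivAt_id x).const_mul a).add_const b).deriv

lemma F_eq (γ δ x y z : ℝ) : F γ δ x y z =
    ![-2 * y ^ 2 + γ * x + z + δ * y, 2 * x * y + γ * y - δ * x, -2 * x * z - 2 * z] := by
  funext i
  fin_cases i <;>
    simp [F, gradH_eq, Jmat, Rmat, mulVec, dotProduct, Fin.sum_univ_three] <;> ring

/-- The reduced three-wave-interaction model is a resistive-Hamiltonian system:
`(J − R)∇H` gives its equations of motion; moreover `∇H·((J−R)∇H) = 2γ(x²+y²) − 2z`,
the divergence of the vector field is identically `2(γ−1)`, and the Poisson vector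
`J = (0, z, y − δ/2)` satisfies `∇×J = 0`. -/
theorem stmt_8 (γ δ : ℝ) :
    (∀ x y z : ℝ, F γ δ x y z =
      ![-2 * y ^ 2 + γ * x + z + δ * y, 2 * x * y + γ * y - δ * x, -2 * x * z - 2 * z]) ∧
    (∀ x y z : ℝ, gradH x y z ⬝ᵥ F γ δ x y z = 2 * γ * (x ^ 2 + y ^ 2) - 2 * z) ∧
    (∀ x y z : ℝ,
      pd1 (fun x y z => F γ δ x y z 0) x y z + pd2 (fun x y z => F γ δ x y z 1) x y z
        + pd3 (fun x y z => F γ δ x y z 2) x y z = 2 * (γ - 1)) ∧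
    (∀ x y z : ℝ,
      (pd2 (fun x y z => y - δ / 2) x y z - pd3 (fun x y z => z) x y z,
       pd3 (fun x y z => (0 : ℝ)) x y z - pd1 (fun x y z => y - δ / 2) x y z,
       pd1 (fun x y z => z) x y z - pd2 (fun x y z => (0 : ℝ)) x y z)
        = ((0 : ℝ), (0 : ℝ), (0 : ℝ))) := by
  refine ⟨fun x y z => F_eq γ δ x y z, fun x y z => ?_, fun x y z => ?_, fun x y z => ?_⟩
  · rw [gradH_eq, F_eq]
    simp [dotProduct, Fin.sum_univ_three]
    ring
  · have h1 : pd1 (fun x y z => F γ δ x y z 0) x y z = γ := by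
      simp only [pd1, F_eq]
      rw [show (fun t : ℝ => ![-2 * y ^ 2 + γ * t + z + δ * y, 2 * t * y + γ * y - δ * t,
          -2 * t * z - 2 * z] 0) = fun t : ℝ => γ * t + (-2 * y ^ 2 + z + δ * y) by
        funext t; simp; ring]
      exact deriv_linear _ _ _
    have h2 : pd2 (fun x y z => F γ δ x y z 1) x y z = 2 * x + γ := by
      simp only [pd2, F_eq]
      rw [show (fun t : ℝ => ![-2 * t ^ 2 + γ * x + z + δ * t, 2 * x * t + γ * t - δ * x,
          -2 * x * z - 2 * z] 1) = fun t : ℝ => (2 * x + γ) * t + (-(δ * x)) by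
        funext t; simp; ring]
      exact deriv_linear _ _ _
    have h3 : pd3 (fun x y z => F γ δ x y z 2) x y z = -2 * x - 2 := by
      simp only [pd3, F_eq]
      rw [show (fun t : ℝ => ![-2 * y ^ 2 + γ * x + t + δ * y, 2 * x * y + γ * y - δ * x,
          -2 * x * t - 2 * t] 2) = fun t : ℝ => (-2 * x - 2) * t + 0 by
        funext t; simp; ring]
      exact deriv_linear _ _ _
    rw [h1, h2, h3]; ring
  · simp [pd1, pd2, pd3]
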